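/- arXiv:1704.00356 — 2 statements merged into one kernel-verified Lean document; each statement's English description precedes it below -/
import Mathlib

section
/- For every approval-based multi-winner election and every PJR-Exact run of that election (i.e., every sequence of choices of winners and of fraction removals satisfying the three defining conditions of the PJR-Exact family), the resulting winning committee W = {w_1, …, w_k} provides proportional justified representation (PJR). -/
open Finset

variable {C : Type*} [Fintype C] [DecidableEq C]

/-- The voters approving candidate `c`. -/
def approvers {n : ℕ} (A : Fin n → Finset C) (c : C) : Finset (Fin n) :=
  Finset.univ.filter (fun i => c ∈ A i)

/-- The exact quota `q = n / k`. -/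
def quota (n k : ℕ) : ℚ := (n : ℚ) / (k : ℚ)

/-- Remaining support of candidate `c` under vote fractions `f`. -/
def supp {n : ℕ} (A : Fin n → Finset C) (f : Fin n → ℚ) (c : C) : ℚ :=
  ∑ i ∈ approvers A c, f i

/-- The set `W_j = {w_1, …, w_j}` of the first `j` winners. -/
def Wset (w : ℕ → C) (j : ℕ) : Finset C := (Finset.Icc 1 j).image w

/-- The candidates approved by every voter in `Ns`, i.e. `⋂_{i ∈ Ns} A i`. -/
def commonApproved {n : ℕ} (A : Fin n → Finset C) (Ns : Finset (Fin n)) : Finset C :=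
  Finset.univ.filter (fun c => ∀ i ∈ Ns, c ∈ A i)

/-- `Ns` is an `ℓ`-cohesive group of voters: `|Ns| ≥ ℓ·n/k` and `|⋂_{i ∈ Ns} A i| ≥ ℓ`. -/
def Cohesive {n : ℕ} (A : Fin n → Finset C) (k ℓ : ℕ) (Ns : Finset (Fin n)) : Prop :=
  (ℓ : ℚ) * (n : ℚ) / (k : ℚ) ≤ (Ns.card : ℚ) ∧ ℓ ≤ (commonApproved A Ns).card

/-- `W` provides proportional justified representation for `(A, k)`. -/
def ProvidesPJR {n : ℕ} (A : Fin n → Finset C) (k : ℕ) (W : Finset C) : Prop :=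
  ∀ ℓ : ℕ, 1 ≤ ℓ → ℓ ≤ k → ∀ Ns : Finset (Fin n), Cohesive A k ℓ Ns →
    ℓ ≤ (W ∩ Ns.biUnion A).card

/-- `W` provides extended justified representation for `(A, k)`. -/
def ProvidesEJR {n : ℕ} (A : Fin n → Finset C) (k : ℕ) (W : Finset C) : Prop :=
  ∀ ℓ : ℕ, 1 ≤ ℓ → ℓ ≤ k → ∀ Ns : Finset (Fin n), Cohesive A k ℓ Ns →
    ∃ i ∈ Ns, ℓ ≤ (A i ∩ W).card

/-- The set of `ℓ`'s satisfying the dissatisfaction-level fixpoint equation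
`ℓ = ⌊(k/n)·|{i : c ∈ A_i ∧ |A_i ∩ W| < ℓ}|⌋`
(natural-number division `k * m / n` is exactly the floor `⌊(k/n)·m⌋`). -/
def dissatSet {n : ℕ} (A : Fin n → Finset C) (k : ℕ) (W : Finset C) (c : C) : Set ℕ :=
  {ℓ : ℕ | ℓ = k * (Finset.univ.filter (fun i => c ∈ A i ∧ (A i ∩ W).card < ℓ)).card / n}

/-- The dissatisfaction level `ℓ(c, W)`: the largest non-negative integer satisfying
the fixpoint equation. -/
noncomputable def dissat {n : ℕ} (A : Fin n → Finset C) (k : ℕ) (W : Finset C) (c : C) : ℕ :=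
  sSup (dissatSet A k W c)

/-- `ℓ_W(i, c) = max_{c' ∈ A_i \ (W ∪ {c})} ℓ(c', W)` (with `max ∅ = 0`). -/
noncomputable def dissatVoter {n : ℕ} (A : Fin n → Finset C) (k : ℕ) (W : Finset C)
    (i : Fin n) (c : C) : ℕ :=
  (A i \ insert c W).sup (dissat A k W)

/-- `ℓ_W(i) = max_{c ∈ A_i \ W} ℓ(c, W)` (with `max ∅ = 0`). -/
noncomputable def dissatVoterAll {n : ℕ} (A : Fin n → Finset C) (k : ℕ) (W : Finset C)
    (i : Fin n) : ℕ :=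
  (A i \ W).sup (dissat A k W)

/-- `g_i(c)` relative to the committee `W`. -/
noncomputable def gfun {n : ℕ} (A : Fin n → Finset C) (k : ℕ) (W : Finset C)
    (i : Fin n) (c : C) : ℚ :=
  if dissatVoter A k W i c ≤ (A i ∩ W).card then 0
  else ((dissatVoter A k W i c : ℚ) - ((A i ∩ W).card : ℚ) - 1) / (dissatVoter A k W i c : ℚ)

/-- Candidate `c ∉ W` is in a normal state (w.r.t. committee `W` and fractions `f`). -/
def NormalState {n : ℕ} (A : Fin n → Finset C) (k : ℕ) (f : Fin n → ℚ) (W : Finset C)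
    (c : C) : Prop :=
  (∀ i : Fin n, c ∈ A i → (A i ∩ W).card < dissatVoter A k W i c →
      ((dissatVoter A k W i c : ℚ) - ((A i ∩ W).card : ℚ)) / (dissatVoter A k W i c : ℚ) ≤ f i) ∧
  quota n k ≤ ∑ i ∈ approvers A c, (f i - gfun A k W i c)

/-- Candidate `c ∉ W` is in a starving state. -/
def StarvingState {n : ℕ} (A : Fin n → Finset C) (k : ℕ) (f : Fin n → ℚ) (W : Finset C)
    (c : C) : Prop :=
  ∃ i : Fin n, c ∈ A i ∧ (A i ∩ W).card < dissatVoter A k W i c ∧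
    f i < ((dissatVoter A k W i c : ℚ) - ((A i ∩ W).card : ℚ)) / (dissatVoter A k W i c : ℚ)

/-- Candidate `c ∉ W` is in an eager state. -/
def EagerState {n : ℕ} (A : Fin n → Finset C) (k : ℕ) (f : Fin n → ℚ) (W : Finset C)
    (c : C) : Prop :=
  ¬ StarvingState A k f W c ∧ quota n k ≤ supp A f c ∧
    ∑ i ∈ approvers A c, (f i - gfun A k W i c) < quota n k

/-- A run of a voting rule in the PJR-Exact family: a sequence of distinct winners
`w 1, …, w k` together with fraction functions `f 0, …, f k` satisfying the three
defining conditions of the family. -/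
structure PJRExactRun (n k : ℕ) (A : Fin n → Finset C) where
  w : ℕ → C
  f : ℕ → Fin n → ℚ
  /-- the selected candidates are pairwise distinct -/
  w_inj : ∀ j j' : ℕ, 1 ≤ j → j ≤ k → 1 ≤ j' → j' ≤ k → w j = w j' → j = j'
  /-- initially each voter has her whole vote -/
  f_zero : ∀ i, f 0 i = 1
  /-- fractions stay non-negative -/
  f_nonneg : ∀ j, 1 ≤ j → j ≤ k → ∀ i, 0 ≤ f j i
  /-- fractions never increase -/
  f_mono : ∀ j, 1 ≤ j → j ≤ k → ∀ i, f j i ≤ f (j - 1) i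
  /-- if the remaining support of the winner exceeds the quota, exactly `q` votes are removed -/
  remove_big : ∀ j, 1 ≤ j → j ≤ k → quota n k < supp A (f (j - 1)) (w j) →
    ∑ i ∈ approvers A (w j), (f (j - 1) i - f j i) = quota n k
  /-- if the remaining support of the winner is at most the quota, all of it is removed -/
  remove_small : ∀ j, 1 ≤ j → j ≤ k → supp A (f (j - 1)) (w j) ≤ quota n k →
    ∀ i, w j ∈ A i → f j i = 0
  /-- voters not approving the winner keep their fractions -/
  f_untouched : ∀ j, 1 ≤ j → j ≤ k → ∀ i, w j ∉ A i → f j i = f (j - 1) i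
  /-- if some unelected candidate has remaining support at least `q`,
  then so has the selected one -/
  greedy : ∀ j, 1 ≤ j → j ≤ k →
    (∃ c, c ∉ Wset w (j - 1) ∧ quota n k ≤ supp A (f (j - 1)) c) →
    quota n k ≤ supp A (f (j - 1)) (w j)

/-- Iteration `j` of a PJR-Exact run is normal. -/
def NormalIteration {n k : ℕ} {A : Fin n → Finset C} (R : PJRExactRun n k A) (j : ℕ) : Prop :=
  NormalState A k (R.f (j - 1)) (Wset R.w (j - 1)) (R.w j) ∧
  ∀ i : Fin n, R.w j ∈ A i →
    (A i ∩ Wset R.w (j - 1)).card < dissatVoter A k (Wset R.w (j - 1)) i (R.w j) →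
    ((dissatVoter A k (Wset R.w (j - 1)) i (R.w j) : ℚ) - ((A i ∩ Wset R.w j).card : ℚ)) /
      (dissatVoter A k (Wset R.w (j - 1)) i (R.w j) : ℚ) ≤ R.f j i

/-!
Suppose an `ℓ`-cohesive group `N*` is approved by fewer than `ℓ` winners. Each round removes at
most `q` votes in total, and none from `N*` unless one of its members approves the winner, so `N*`,
starting with at least `ℓ·q` votes, keeps at least `q` throughout. A candidate approved by all of
`N*` is never elected and so keeps support at least `q`; by the greedy condition every winner then
has support at least `q`, and exactly `q` votes are removed in each round. After `k` rounds all
`n = k·q` votes are spent, contradicting the `q > 0` still held by `N*`.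
-/

section Run

variable {α : Type*} [DecidableEq α] {n k : ℕ} {A : Fin n → Finset α}

theorem Wset_succ (w : ℕ → α) (j : ℕ) : Wset w (j + 1) = insert (w (j + 1)) (Wset w j) := by
  rw [Wset, Wset, ← Finset.insert_Icc_right_eq_Icc_add_one (by omega), Finset.image_insert]

theorem Wset_mono (w : ℕ → α) {j j' : ℕ} (h : j ≤ j') : Wset w j ⊆ Wset w j' :=
  Finset.image_subset_image (Finset.Icc_subset_Icc_right h)

theorem quota_nonneg : 0 ≤ quota n k := by
  unfold quota
  positivity

theorem quota_pos (hn : 0 < n) (hk : 0 < k) : 0 < quota n k := by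
  unfold quota
  positivity

theorem natCast_mul_quota (hk : k ≠ 0) : (k : ℚ) * quota n k = n := by
  unfold quota
  field_simp

theorem sum_le_supp_of_mem_commonApproved [Fintype α] {f : Fin n → ℚ} (hf : ∀ i, 0 ≤ f i)
    {Ns : Finset (Fin n)} {c : α} (hc : c ∈ commonApproved A Ns) :
    ∑ i ∈ Ns, f i ≤ supp A f c := by
  refine Finset.sum_le_sum_of_subset_of_nonneg (fun i hi => ?_) fun i _ _ => hf i
  simpa [approvers] using (Finset.mem_filter.mp hc).2 i hi

theorem exists_mem_commonApproved_notMem [Fintype α] {W : Finset α} {Ns : Finset (Fin n)}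
    (hNs : Ns.Nonempty) (h : (W ∩ Ns.biUnion A).card < (commonApproved A Ns).card) :
    ∃ c ∈ commonApproved A Ns, c ∉ W := by
  obtain ⟨c, hc, hcW⟩ := Finset.exists_mem_notMem_of_card_lt_card h
  obtain ⟨i, hi⟩ := hNs
  have hcA : c ∈ Ns.biUnion A :=
    Finset.mem_biUnion.mpr ⟨i, hi, (Finset.mem_filter.mp hc).2 i hi⟩
  exact ⟨c, hc, fun hc' => hcW (Finset.mem_inter.mpr ⟨hc', hcA⟩)⟩

namespace PJRExactRun

variable (R : PJRExactRun n k A)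

theorem f_nonneg_of_le {j : ℕ} (hj : j ≤ k) (i : Fin n) : 0 ≤ R.f j i := by
  rcases Nat.eq_zero_or_pos j with rfl | hj0
  · simp [R.f_zero]
  · exact R.f_nonneg j hj0 hj i

theorem f_succ_le {j : ℕ} (hj : j < k) (i : Fin n) : R.f (j + 1) i ≤ R.f j i := by
  simpa using R.f_mono (j + 1) (by omega) hj i

theorem f_succ_of_notMem {j : ℕ} (hj : j < k) {i : Fin n} (h : R.w (j + 1) ∉ A i) :
    R.f (j + 1) i = R.f j i := by
  simpa using R.f_untouched (j + 1) (by omega) hj i h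

theorem w_succ_notMem_Wset {j : ℕ} (hj : j < k) : R.w (j + 1) ∉ Wset R.w j := by
  simp only [Wset, Finset.mem_image, Finset.mem_Icc, not_exists, not_and]
  rintro j' ⟨hj'1, hj'j⟩ hw
  have := R.w_inj j' (j + 1) hj'1 (by omega) (by omega) hj hw
  omega

theorem quota_le_supp_w_succ {j : ℕ} (hj : j < k) {c : α} (hc : c ∉ Wset R.w j)
    (hc_supp : quota n k ≤ supp A (R.f j) c) : quota n k ≤ supp A (R.f j) (R.w (j + 1)) := by
  simpa using R.greedy (j + 1) (by omega) hj ⟨c, by simpa using hc, by simpa using hc_supp⟩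

theorem sum_approvers_sub_eq_min {j : ℕ} (hj : j < k) :
    ∑ i ∈ approvers A (R.w (j + 1)), (R.f j i - R.f (j + 1) i) =
      min (supp A (R.f j) (R.w (j + 1))) (quota n k) := by
  rcases le_or_gt (supp A (R.f j) (R.w (j + 1))) (quota n k) with hsmall | hbig
  · rw [min_eq_left hsmall, supp]
    refine Finset.sum_congr rfl fun i hi => ?_
    have hzero := R.remove_small (j + 1) (by omega) hj (by simpa using hsmall) i
      (by simpa [approvers] using hi)
    rw [hzero, sub_zero]
  · rw [min_eq_right hbig.le]
    simpa using R.remove_big (j + 1) (by omega) hj (by simpa using hbig)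

theorem sum_sub_sum_succ_eq_min {j : ℕ} (hj : j < k) :
    ∑ i, R.f j i - ∑ i, R.f (j + 1) i = min (supp A (R.f j) (R.w (j + 1))) (quota n k) := by
  rw [← R.sum_approvers_sub_eq_min hj, ← Finset.sum_sub_distrib]
  refine (Finset.sum_subset (Finset.subset_univ _) fun i _ hi => ?_).symm
  rw [R.f_succ_of_notMem hj (by simpa [approvers] using hi), sub_self]

theorem sum_sub_sum_succ_le_quota {j : ℕ} (hj : j < k) (Ns : Finset (Fin n)) :
    ∑ i ∈ Ns, R.f j i - ∑ i ∈ Ns, R.f (j + 1) i ≤ quota n k := by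
  calc ∑ i ∈ Ns, R.f j i - ∑ i ∈ Ns, R.f (j + 1) i
      = ∑ i ∈ Ns, (R.f j i - R.f (j + 1) i) := (Finset.sum_sub_distrib _ _).symm
    _ ≤ ∑ i, (R.f j i - R.f (j + 1) i) :=
        Finset.sum_le_sum_of_subset_of_nonneg (Finset.subset_univ _)
          fun i _ _ => sub_nonneg.mpr (R.f_succ_le hj i)
    _ = min (supp A (R.f j) (R.w (j + 1))) (quota n k) := by
        rw [Finset.sum_sub_distrib, R.sum_sub_sum_succ_eq_min hj]
    _ ≤ quota n k := min_le_right _ _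

theorem sum_succ_eq_of_notMem_biUnion {j : ℕ} (hj : j < k) {Ns : Finset (Fin n)}
    (h : R.w (j + 1) ∉ Ns.biUnion A) : ∑ i ∈ Ns, R.f (j + 1) i = ∑ i ∈ Ns, R.f j i :=
  Finset.sum_congr rfl fun i hi =>
    R.f_succ_of_notMem hj fun hw => h (Finset.mem_biUnion.mpr ⟨i, hi, hw⟩)

theorem card_sub_mul_quota_le_sum (Ns : Finset (Fin n)) :
    ∀ j ≤ k, (Ns.card : ℚ) - (Wset R.w j ∩ Ns.biUnion A).card * quota n k ≤
      ∑ i ∈ Ns, R.f j i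
  | 0, _ => by simp [Wset, R.f_zero]
  | j + 1, hj => by
    have ih := card_sub_mul_quota_le_sum Ns j (by omega)
    have hnew : R.w (j + 1) ∉ Wset R.w j ∩ Ns.biUnion A :=
      fun h => R.w_succ_notMem_Wset hj (Finset.mem_inter.mp h).1
    by_cases hw : R.w (j + 1) ∈ Ns.biUnion A
    · rw [Wset_succ, Finset.insert_inter_of_mem hw, Finset.card_insert_of_notMem hnew]
      push_cast
      linarith [R.sum_sub_sum_succ_le_quota hj Ns]
    · rw [Wset_succ, Finset.insert_inter_of_notMem hw, R.sum_succ_eq_of_notMem_biUnion hj hw]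
      exact ih

theorem quota_le_sum_of_card_inter_lt {ℓ : ℕ} {Ns : Finset (Fin n)}
    (hsize : ℓ * quota n k ≤ Ns.card) (hfew : (Wset R.w k ∩ Ns.biUnion A).card < ℓ)
    {j : ℕ} (hj : j ≤ k) : quota n k ≤ ∑ i ∈ Ns, R.f j i := by
  have hrep : (Wset R.w j ∩ Ns.biUnion A).card + 1 ≤ ℓ :=
    (Finset.card_le_card (Finset.inter_subset_inter_right (Wset_mono R.w hj))).trans_lt hfew
  have hrep' : ((Wset R.w j ∩ Ns.biUnion A).card : ℚ) + 1 ≤ ℓ := by exact_mod_cast hrep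
  nlinarith [R.card_sub_mul_quota_le_sum Ns j hj, quota_nonneg (n := n) (k := k)]

theorem sum_eq_sub_mul_quota :
    ∀ m ≤ k, (∀ j < m, quota n k ≤ supp A (R.f j) (R.w (j + 1))) →
      ∑ i, R.f m i = n - m * quota n k
  | 0, _, _ => by simp [R.f_zero]
  | m + 1, hm, hsupp => by
    have ih := sum_eq_sub_mul_quota m (by omega) fun j hj => hsupp j (by omega)
    have hstep := R.sum_sub_sum_succ_eq_min hm
    rw [min_eq_right (hsupp m (by omega))] at hstep
    push_cast
    linarith

end PJRExactRun

end Run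

theorem pjrExact_satisfies_PJR_general {C : Type*} [Fintype C] [DecidableEq C] {n k : ℕ}
    (hn : 0 < n)
    (A : Fin n → Finset C) (R : PJRExactRun n k A) :
    ProvidesPJR A k (Wset R.w k) := by
  intro ℓ hℓ hℓk Ns ⟨hsize, hcommon⟩
  by_contra! hfew
  have hq : 0 < quota n k := quota_pos hn (by omega)
  have hsize' : ℓ * quota n k ≤ Ns.card := by rwa [quota, ← mul_div_assoc]
  have hNs : Ns.Nonempty := by
    rw [← Finset.card_pos]
    exact_mod_cast (by positivity : (0 : ℚ) < ℓ * quota n k).trans_le hsize'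
  have hkeep j (hj : j ≤ k) := R.quota_le_sum_of_card_inter_lt hsize' hfew hj
  obtain ⟨c, hc, hcW⟩ := exists_mem_commonApproved_notMem hNs (hfew.trans_le hcommon)
  have hgreedy : ∀ j < k, quota n k ≤ supp A (R.f j) (R.w (j + 1)) := fun j hj =>
    R.quota_le_supp_w_succ hj (fun h => hcW (Wset_mono R.w hj.le h))
      ((hkeep j hj.le).trans (sum_le_supp_of_mem_commonApproved (R.f_nonneg_of_le hj.le) hc))
  have hspent := R.sum_eq_sub_mul_quota k le_rfl hgreedy
  rw [natCast_mul_quota (by omega), sub_self] at hspent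
  have hNs_le : ∑ i ∈ Ns, R.f k i ≤ ∑ i, R.f k i :=
    Finset.sum_le_sum_of_subset_of_nonneg (Finset.subset_univ Ns)
      fun i _ _ => R.f_nonneg_of_le le_rfl i
  linarith [hkeep k le_rfl]

/-- every PJR-Exact run produces a committee that provides PJR. -/
theorem pjrExact_satisfies_PJR {C : Type*} [Fintype C] [DecidableEq C] {n k : ℕ}
    (hn : 0 < n) (hk : 1 ≤ k) (hkC : k ≤ Fintype.card C)
    (A : Fin n → Finset C) (R : PJRExactRun n k A) :
    ProvidesPJR A k (Wset R.w k) :=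
  pjrExact_satisfies_PJR_general hn A R
end

section
/- Consider a ballot profile A = (A_1,…,A_n) over a candidate set C and a target committee size k ≤ |C|. If W ⊆ C with |W| = k is such that every candidate c ∈ C \ W has dissatisfaction level ℓ(c, W) = 0, then W provides extended justified representation (EJR). -/
/-!
Suppose an `ℓ`-cohesive group `N*` has every member with fewer than `ℓ` approved winners. The
`≥ ℓ` commonly approved candidates cannot all lie in `W`, since each member sees fewer than `ℓ`
of them there; pick one, `c ∉ W`. The right-hand side `φ(m)` (`dissatMap`) of the fixpoint equation
defining `ℓ(c, W)` is monotone in `m` and bounded by `k`, and cohesiveness of `N*` gives `ℓ ≤ φ(ℓ)`.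
Iterating `φ` from `ℓ` therefore reaches a fixpoint `≥ ℓ`, so `ℓ(c, W) ≥ ℓ ≥ 1`.
-/

open Finset

variable {C : Type*} [Fintype C] [DecidableEq C]

theorem Nat.exists_fixedPoint_ge_of_monotone {g : ℕ → ℕ} (hg : Monotone g) {B : ℕ}
    (hB : ∀ m, g m ≤ B) {a : ℕ} (ha : a ≤ g a) : ∃ m, a ≤ m ∧ g m = m := by
  induction hd : B - a using Nat.strong_induction_on generalizing a with
  | _ d ih =>
    rcases ha.eq_or_lt with hfix | hlt
    · exact ⟨a, le_rfl, hfix.symm⟩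
    · obtain ⟨m, hm, hfix⟩ := ih (B - g a) (by have := hB a; omega) (hg ha) rfl
      exact ⟨m, hlt.le.trans hm, hfix⟩

def dissatMap {n : ℕ} (A : Fin n → Finset C) (k : ℕ) (W : Finset C) (c : C) (m : ℕ) : ℕ :=
  k * (univ.filter (fun i => c ∈ A i ∧ (A i ∩ W).card < m)).card / n

section dissatMap

omit [Fintype C]

variable {n : ℕ} (A : Fin n → Finset C) (k : ℕ) (W : Finset C) (c : C)

theorem mem_dissatSet_iff {m : ℕ} : m ∈ dissatSet A k W c ↔ m = dissatMap A k W c m :=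
  Iff.rfl

theorem dissatMap_monotone : Monotone (dissatMap A k W c) := by
  intro a b hab
  refine Nat.div_le_div_right (Nat.mul_le_mul_left _ (card_le_card fun i hi => ?_))
  simp only [mem_filter, mem_univ, true_and] at hi ⊢
  exact ⟨hi.1, hi.2.trans_le hab⟩

theorem dissatMap_le (m : ℕ) : dissatMap A k W c m ≤ k :=
  Nat.div_le_of_le_mul <| calc
    k * _ ≤ k * n := Nat.mul_le_mul_left _ ((card_le_univ _).trans_eq (Fintype.card_fin n))
    _ = n * k := Nat.mul_comm k n

theorem le_dissat_of_le_dissatMap {ℓ : ℕ} (hℓ : ℓ ≤ dissatMap A k W c ℓ) :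
    ℓ ≤ dissat A k W c := by
  obtain ⟨m, hℓm, hfix⟩ :=
    Nat.exists_fixedPoint_ge_of_monotone (dissatMap_monotone A k W c) (dissatMap_le A k W c) hℓ
  have hbdd : BddAbove (dissatSet A k W c) :=
    ⟨k, fun x hx => (mem_dissatSet_iff A k W c).mp hx ▸ dissatMap_le A k W c x⟩
  exact hℓm.trans (le_csSup hbdd ((mem_dissatSet_iff A k W c).mpr hfix.symm))

theorem le_dissatMap_of_forall_mem {Ns : Finset (Fin n)} {ℓ : ℕ} (hn : 0 < n)
    (hsize : ℓ * n ≤ k * Ns.card) (hNs : ∀ i ∈ Ns, c ∈ A i ∧ (A i ∩ W).card < ℓ) :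
    ℓ ≤ dissatMap A k W c ℓ := by
  rw [dissatMap, Nat.le_div_iff_mul_le hn]
  refine hsize.trans (Nat.mul_le_mul_left _ (card_le_card fun i hi => ?_))
  simpa only [mem_filter, mem_univ, true_and] using hNs i hi

end dissatMap

section Cohesive

variable {n : ℕ} {A : Fin n → Finset C} {k ℓ : ℕ} {Ns : Finset (Fin n)}

theorem Cohesive.mul_le_mul_card (h : Cohesive A k ℓ Ns) (hk : 0 < k) : ℓ * n ≤ k * Ns.card := by
  have hkQ : (0 : ℚ) < k := by exact_mod_cast hk
  have := h.1
  rw [div_le_iff₀ hkQ] at this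
  exact_mod_cast (by linarith : (ℓ : ℚ) * n ≤ k * Ns.card)

theorem Cohesive.nonempty (h : Cohesive A k ℓ Ns) (hn : 0 < n) (hℓ : 0 < ℓ) (hk : 0 < k) :
    Ns.Nonempty :=
  card_pos.mp <| pos_of_mul_pos_right ((Nat.mul_pos hℓ hn).trans_le (h.mul_le_mul_card hk))
    (Nat.zero_le k)

theorem Cohesive.exists_common_notMem {W : Finset C} (h : Cohesive A k ℓ Ns) {i₀ : Fin n}
    (hi₀ : i₀ ∈ Ns) (hunder : (A i₀ ∩ W).card < ℓ) : ∃ c ∉ W, ∀ i ∈ Ns, c ∈ A i := by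
  have hinter : (commonApproved A Ns ∩ W).card < ℓ := by
    refine (card_le_card fun x hx => ?_).trans_lt hunder
    simp only [mem_inter, commonApproved, mem_filter, mem_univ, true_and] at hx ⊢
    exact ⟨hx.1 i₀ hi₀, hx.2⟩
  obtain ⟨c, hc⟩ : (commonApproved A Ns \ W).Nonempty := by
    rw [← card_pos]
    have := card_sdiff_add_card_inter (commonApproved A Ns) W
    have := h.2
    omega
  rw [mem_sdiff] at hc
  simp only [commonApproved, mem_filter, mem_univ, true_and] at hc
  exact ⟨c, hc.2, hc.1⟩

end Cohesive

theorem dissat_zero_provides_EJR_general {C : Type*} [Fintype C] [DecidableEq C] {n : ℕ}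
    (hn : 0 < n) (A : Fin n → Finset C) (k : ℕ)
    (W : Finset C)
    (hzero : ∀ c : C, c ∉ W → dissat A k W c = 0) :
    ProvidesEJR A k W := by
  intro ℓ hℓ1 hℓk Ns hcoh
  by_contra! hunder
  have hk : 0 < k := by omega
  obtain ⟨i₀, hi₀⟩ := hcoh.nonempty hn hℓ1 hk
  obtain ⟨c, hcW, hcNs⟩ := hcoh.exists_common_notMem hi₀ (hunder i₀ hi₀)
  have hφ : ℓ ≤ dissatMap A k W c ℓ :=
    le_dissatMap_of_forall_mem A k W c hn (hcoh.mul_le_mul_card hk) fun i hi =>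
      ⟨hcNs i hi, hunder i hi⟩
  have := le_dissat_of_le_dissatMap A k W c hφ
  rw [hzero c hcW] at this
  omega

/-- if every unelected candidate has dissatisfaction level 0,
then the committee provides EJR. -/
theorem dissat_zero_provides_EJR {C : Type*} [Fintype C] [DecidableEq C] {n : ℕ}
    (hn : 0 < n) (A : Fin n → Finset C) (k : ℕ) (hk : 1 ≤ k) (hkC : k ≤ Fintype.card C)
    (W : Finset C) (hWcard : W.card = k)
    (hzero : ∀ c : C, c ∉ W → dissat A k W c = 0) :
    ProvidesEJR A k W :=
  dissat_zero_provides_EJR_general hn A k W hzero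
end
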